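/- arXiv:1011.2593 — 3 statements merged into one kernel-verified Lean document; each statement's English description precedes it below -/
import Mathlib

section
/- Let F be a group, R a normal subgroup of F, and c ≥ 1. If u ∈ F is an outer-commutator value of weight w on entries x_1, …, x_w ∈ F, with w > c, and at least one entry x_j lies in R, then u ∈ [R, cF]. -/
/-!
The key inclusion is `⁅[N, aF], [F, bF]⁆ ≤ [N, (a + b + 1)F]` for normal `N`, which follows from
the three subgroups lemma by induction on `b`. Induction on the outer commutator then puts a value
of weight `w` in `[F, (w - 1)F]`, and in `[R, (w - 1)F]` when one of its entries lies in `R`; the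
series `[R, cF]` decreases in `c`.
-/

/-- `[R, cF]`: the iterated commutator subgroup, `[R, 0F] = R`,
`[R, (i+1)F] = ⁅[R, iF], F⁆`. -/
def iteratedCommutator {F : Type*} [Group F] (R : Subgroup F) : ℕ → Subgroup F
  | 0 => R
  | c + 1 => ⁅iteratedCommutator R c, (⊤ : Subgroup F)⁆

open scoped commutatorElement

/-- `IsOuterCommutatorOn l u` means that `u` is an outer-commutator value on
the list of entries `l` (of weight `l.length`). -/
inductive IsOuterCommutatorOn {F : Type*} [Group F] : List F → F → Prop
  | base (x : F) : IsOuterCommutatorOn [x] x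
  | comm {l₁ l₂ : List F} {u v : F} :
      IsOuterCommutatorOn l₁ u → IsOuterCommutatorOn l₂ v →
      IsOuterCommutatorOn (l₁ ++ l₂) ⁅u, v⁆

namespace Subgroup

variable {G : Type*} [Group G]

theorem commutator_commutator_le_of_rotate {A B C N : Subgroup G} [N.Normal]
    (h₁ : ⁅⁅B, C⁆, A⁆ ≤ N) (h₂ : ⁅⁅C, A⁆, B⁆ ≤ N) : ⁅⁅A, B⁆, C⁆ ≤ N := by
  have le_iff_map_eq_bot (H : Subgroup G) : H ≤ N ↔ H.map (QuotientGroup.mk' N) = ⊥ := by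
    rw [map_eq_bot_iff, QuotientGroup.ker_mk']
  rw [le_iff_map_eq_bot] at h₁ h₂ ⊢
  simp only [map_commutator] at h₁ h₂ ⊢
  exact commutator_commutator_eq_bot_of_rotate h₁ h₂

end Subgroup

section IteratedCommutator

variable {F : Type*} [Group F]

theorem iteratedCommutator_succ (R : Subgroup F) (c : ℕ) :
    iteratedCommutator R (c + 1) = ⁅iteratedCommutator R c, ⊤⁆ :=
  rfl

instance iteratedCommutator_normal (R : Subgroup F) [R.Normal] (c : ℕ) :
    (iteratedCommutator R c).Normal := by
  induction c with
  | zero => assumption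
  | succ c _ => rw [iteratedCommutator_succ]; infer_instance

theorem iteratedCommutator_antitone (R : Subgroup F) [R.Normal] :
    Antitone (iteratedCommutator R) :=
  antitone_nat_of_succ_le fun _ => Subgroup.commutator_le_left _ _

theorem iteratedCommutator_add (R : Subgroup F) (a b : ℕ) :
    iteratedCommutator R (a + b) = iteratedCommutator (iteratedCommutator R a) b := by
  induction b with
  | zero => rfl
  | succ b ih => rw [← add_assoc, iteratedCommutator_succ, ih, iteratedCommutator_succ]

theorem commutator_iteratedCommutator_top_le (N : Subgroup F) [N.Normal] (b : ℕ) :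
    ⁅N, iteratedCommutator ⊤ b⁆ ≤ iteratedCommutator N (b + 1) := by
  induction b generalizing N with
  | zero => rfl
  | succ b ih =>
    rw [iteratedCommutator_succ ⊤, Subgroup.commutator_comm]
    apply Subgroup.commutator_commutator_le_of_rotate
    · calc ⁅⁅⊤, N⁆, iteratedCommutator ⊤ b⁆
          = ⁅iteratedCommutator N 1, iteratedCommutator ⊤ b⁆ := by
            rw [Subgroup.commutator_comm ⊤ N]; rfl
        _ ≤ iteratedCommutator (iteratedCommutator N 1) (b + 1) := ih _
        _ = iteratedCommutator N (b + 1 + 1) := by rw [← iteratedCommutator_add, add_comm 1]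
    · exact Subgroup.commutator_mono (ih N) le_rfl

theorem commutator_iteratedCommutator_le (N : Subgroup F) [N.Normal] (a b : ℕ) :
    ⁅iteratedCommutator N a, iteratedCommutator ⊤ b⁆ ≤ iteratedCommutator N (a + b + 1) := by
  rw [add_assoc, iteratedCommutator_add]
  exact commutator_iteratedCommutator_top_le _ b

end IteratedCommutator

namespace IsOuterCommutatorOn

variable {F : Type*} [Group F] {l : List F} {u : F}

theorem length_pos (hu : IsOuterCommutatorOn l u) : 0 < l.length := by
  induction hu with
  | base => simp
  | comm _ _ ih₁ _ => simp only [List.length_append]; omega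

theorem length_append_sub_one {l₁ l₂ : List F} {v : F} (hu : IsOuterCommutatorOn l₁ u)
    (hv : IsOuterCommutatorOn l₂ v) :
    (l₁ ++ l₂).length - 1 = l₁.length - 1 + (l₂.length - 1) + 1 := by
  have := hu.length_pos
  have := hv.length_pos
  simp only [List.length_append]
  omega

theorem mem_iteratedCommutator_top (hu : IsOuterCommutatorOn l u) :
    u ∈ iteratedCommutator ⊤ (l.length - 1) := by
  induction hu with
  | base x => trivial
  | @comm l₁ l₂ u v hu hv ihu ihv =>
    rw [hu.length_append_sub_one hv]
    exact commutator_iteratedCommutator_le ⊤ _ _ (Subgroup.commutator_mem_commutator ihu ihv)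

theorem mem_iteratedCommutator (hu : IsOuterCommutatorOn l u) (R : Subgroup F) [R.Normal]
    (hx : ∃ x ∈ l, x ∈ R) : u ∈ iteratedCommutator R (l.length - 1) := by
  induction hu with
  | base x =>
    obtain ⟨y, hy, hyR⟩ := hx
    rwa [List.mem_singleton.mp hy] at hyR
  | @comm l₁ l₂ u v hu hv ihu ihv =>
    obtain ⟨x, hx, hxR⟩ := hx
    rw [hu.length_append_sub_one hv]
    rcases List.mem_append.mp hx with hx₁ | hx₂
    · exact commutator_iteratedCommutator_le R _ _ (Subgroup.commutator_mem_commutator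
        (ihu ⟨x, hx₁, hxR⟩) hv.mem_iteratedCommutator_top)
    · rw [add_comm (l₁.length - 1)]
      refine commutator_iteratedCommutator_le R _ _ ?_
      rw [Subgroup.commutator_comm]
      exact Subgroup.commutator_mem_commutator hu.mem_iteratedCommutator_top (ihv ⟨x, hx₂, hxR⟩)

end IsOuterCommutatorOn

theorem outerCommutator_mem_iteratedCommutator_general {F : Type*} [Group F]
    (R : Subgroup F) [R.Normal] (c : ℕ)
    (l : List F) (u : F) (hu : IsOuterCommutatorOn l u)
    (hw : c < l.length) (hx : ∃ x ∈ l, x ∈ R) :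
    u ∈ iteratedCommutator R c :=
  iteratedCommutator_antitone R (Nat.le_sub_one_of_lt hw) (hu.mem_iteratedCommutator R hx)

/-- Claim in the proof of Lemma 3.1: an outer-commutator value of weight `w > c`
with at least one entry lying in the normal subgroup `R` belongs to `[R, cF]`. -/
theorem outerCommutator_mem_iteratedCommutator {F : Type*} [Group F]
    (R : Subgroup F) [R.Normal] (c : ℕ) (hc : 1 ≤ c)
    (l : List F) (u : F) (hu : IsOuterCommutatorOn l u)
    (hw : c < l.length) (hx : ∃ x ∈ l, x ∈ R) :
    u ∈ iteratedCommutator R c :=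
  outerCommutator_mem_iteratedCommutator_general R c l u hu hw hx
end

section
/- Let p be a prime, e ≥ 1, k ≥ 1 integers, and set m = ⌊log_p k⌋. Let F be a free group and R a normal subgroup of F such that γ_{k+1}(F) ≤ R and x^(p^e) ∈ R for every x ∈ F. Then for every g in the commutator subgroup ⁅F, F⁆, one has g^(p^(e+m(k−1))) ∈ ⁅R, F⁆. -/
/-!
Modulo `⁅R, F⁆` the subgroup `R` becomes central, so it suffices to show: if `x ^ p ^ e` is
central for every `x` and `γ_{k+1}` is central, then `γ_{i+2}` has exponent dividing
`p ^ (e + m (k - i - 1))`, where `m = ⌊log_p k⌋`. This goes by downward induction on `i`. Put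
`N = p ^ (e + m (k - i - 1))` and give `γ_{i+1+b}` weight `b`. A Hall–Petrescu type collection
writes `(u v) ^ N = u ^ N v ^ N ∏ g ^ C(N, r)` for `v` of weight `1`, with each `g` of some
weight `b ≥ 2` and `1 ≤ r ≤ b`. As `p ^ (t - log_p r)` divides `C(p ^ t, r)` and
`log_p r ≤ m ≤ m (b - 1)`, every correction factor vanishes by induction. So `x ↦ x ^ N` is
multiplicative on `γ_{i+2}`, and on generators `⁅y, z⁆ ^ N = ⁅y ^ N, z⁆ = 1` as `y ^ N` is
central.

The collection is carried out on sequences `ℕ → G`: `binomialWords M a d s` is generated by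
the sequences `n ↦ g ^ C(n, r)` with `g` of weight `b ≥ a`, `r ≥ d` and `r + s ≤ b`. It is
closed under commutators (weights add) and under the conjugated partial products `leftProd`
(which raise `r` by one). These two closure properties are proved together by induction on
the distance `φ` from the bottom `M T = ⊥` of the filtration.
-/

open scoped commutatorElement

theorem Nat.pow_sub_log_dvd_choose_prime_pow {p : ℕ} (hp : p.Prime) (t : ℕ) {r : ℕ}
    (hr : r ≠ 0) : p ^ (t - Nat.log p r) ∣ (p ^ t).choose r := by
  have := Fact.mk hp
  rcases eq_or_ne ((p ^ t).choose r) 0 with h0 | h0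
  · rw [h0]; exact dvd_zero _
  obtain ⟨r, rfl⟩ : ∃ r', r = r' + 1 := ⟨r - 1, by omega⟩
  have hdvd : p ^ t ∣ (p ^ t).choose (r + 1) * (r + 1) := by
    obtain ⟨n, hn⟩ : ∃ n, p ^ t = n + 1 := Nat.exists_eq_succ_of_ne_zero (pow_ne_zero _ hp.ne_zero)
    rw [hn, ← Nat.add_one_mul_choose_eq]
    exact dvd_mul_right _ _
  rw [padicValNat_dvd_iff_le (mul_ne_zero h0 r.add_one_ne_zero),
    padicValNat.mul h0 r.add_one_ne_zero] at hdvd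
  rw [padicValNat_dvd_iff_le h0]
  have := padicValNat_le_nat_log (p := p) (r + 1)
  omega

section

open Subgroup

variable {G : Type*} [Group G]

theorem Subgroup.commutator_commutator_le_of_rotate_s6 {A B C N : Subgroup G} [N.Normal]
    (h₁ : ⁅⁅B, C⁆, A⁆ ≤ N) (h₂ : ⁅⁅C, A⁆, B⁆ ≤ N) : ⁅⁅A, B⁆, C⁆ ≤ N := by
  have key : ∀ {X Y Z : Subgroup G}, ⁅⁅X, Y⁆, Z⁆ ≤ N ↔
      ⁅⁅X.map (QuotientGroup.mk' N), Y.map (QuotientGroup.mk' N)⁆,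
        Z.map (QuotientGroup.mk' N)⁆ = ⊥ := by
    intro X Y Z
    rw [← map_commutator, ← map_commutator, map_eq_bot_iff, QuotientGroup.ker_mk']
  exact key.2 (commutator_commutator_eq_bot_of_rotate (key.1 h₁) (key.1 h₂))

theorem Subgroup.commutator_lowerCentralSeries_le (a b : ℕ) :
    ⁅(⊤ : Subgroup G).lowerCentralSeries a, (⊤ : Subgroup G).lowerCentralSeries b⁆ ≤
      (⊤ : Subgroup G).lowerCentralSeries (a + b + 1) := by
  induction b generalizing a with
  | zero => rfl
  | succ b ih =>
    rw [lowerCentralSeries_succ, commutator_comm]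
    refine commutator_commutator_le_of_rotate_s6 ?_ ?_
    · rw [commutator_comm ⊤, ← lowerCentralSeries_succ]
      exact (ih (a + 1)).trans_eq (by rw [Nat.add_right_comm a 1 b, Nat.add_assoc a b 1])
    · exact (commutator_mono (ih a) le_rfl).trans
        (lowerCentralSeries_antitone ⊤ (by omega : a + (b + 1) + 1 ≤ a + b + 1 + 1))

theorem commutatorElement_mul_left_eq_mul_commutatorElement (x z w : G) :
    ⁅x * z, w⁆ = ⁅z, w⁆ * ⁅⁅z, w⁆⁻¹, x⁆ * ⁅x, w⁆ := by
  simp only [commutatorElement_def]; group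

theorem commutatorElement_mul_right_eq_mul_commutatorElement (x u v : G) :
    ⁅x, u * v⁆ = ⁅x, u⁆ * (⁅x, v⁆ * ⁅⁅x, v⁆⁻¹, u⁆) := by
  simp only [commutatorElement_def]; group

theorem inv_mul_mul_eq_mul_commutatorElement (w x : G) : w⁻¹ * x * w = x * ⁅x⁻¹, w⁻¹⁆ := by
  simp only [commutatorElement_def]; group

structure IsStronglyCentralFiltration (M : ℕ → Subgroup G) : Prop where
  antitone : Antitone M
  commutator_mem {a b : ℕ} {g h : G} : g ∈ M a → h ∈ M b → ⁅g, h⁆ ∈ M (a + b)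
  commutator_mem_succ {a : ℕ} {g : G} (y : G) : g ∈ M a → ⁅g, y⁆ ∈ M (a + 1)

def binomialWords (M : ℕ → Subgroup G) (a d s : ℕ) : Subgroup (ℕ → G) :=
  closure {f | ∃ b r, ∃ g ∈ M b, a ≤ b ∧ d ≤ r ∧ r + s ≤ b ∧ f = fun n => g ^ n.choose r}

namespace binomialWords

variable {M : ℕ → Subgroup G} {a d s : ℕ}

theorem pow_choose_mem {b r : ℕ} {g : G} (hg : g ∈ M b) (ha : a ≤ b) (hd : d ≤ r)
    (hs : r + s ≤ b) : (fun n => g ^ n.choose r) ∈ binomialWords M a d s :=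
  subset_closure ⟨b, r, g, hg, ha, hd, hs, rfl⟩

theorem const_mem {b : ℕ} {g : G} (hg : g ∈ M b) (ha : a ≤ b) (hs : s ≤ b) :
    (fun _ => g) ∈ binomialWords M a 0 s := by
  simpa using pow_choose_mem (r := 0) hg ha le_rfl (by omega)

theorem mono {a' d' s' : ℕ} (ha : a' ≤ a) (hd : d' ≤ d) (hs : s' ≤ s) :
    binomialWords M a d s ≤ binomialWords M a' d' s' :=
  closure_mono fun _ ⟨b, r, g, hg, hab, hdr, hrs, hf⟩ =>
    ⟨b, r, g, hg, ha.trans hab, hd.trans hdr, by omega, hf⟩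

theorem apply_mem (hM : Antitone M) {f : ℕ → G} (hf : f ∈ binomialWords M a d s) (n : ℕ) :
    f n ∈ M a := by
  refine (closure_le ((M a).comap (Pi.evalMonoidHom (fun _ => G) n))).2 ?_ hf
  rintro _ ⟨b, r, g, hg, hab, -, -, rfl⟩
  exact pow_mem (hM hab hg) _

theorem eq_one_of_le {T : ℕ} (hM : Antitone M) (hT : M T = ⊥) (ha : T ≤ a) {f : ℕ → G}
    (hf : f ∈ binomialWords M a d s) : f = 1 :=
  funext fun n => by simpa [hT] using hM ha (apply_mem hM hf n)

@[elab_as_elim]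
theorem induction {motive : (ℕ → G) → Prop} (one : motive 1)
    (pow : ∀ b r g, g ∈ M b → a ≤ b → d ≤ r → r + s ≤ b → motive fun n => g ^ n.choose r)
    (mul : ∀ f₁ f₂, f₁ ∈ binomialWords M a d s → f₂ ∈ binomialWords M a d s →
      motive f₁ → motive f₂ → motive (f₁ * f₂))
    {f : ℕ → G} (hf : f ∈ binomialWords M a d s) : motive f := by
  induction hf using closure_induction'' with
  | mem _ hx =>
    obtain ⟨b, r, g, hg, hab, hdr, hrs, rfl⟩ := hx
    exact pow b r g hg hab hdr hrs
  | inv_mem _ hx =>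
    obtain ⟨b, r, g, hg, hab, hdr, hrs, rfl⟩ := hx
    have hinv : (fun n : ℕ => g ^ n.choose r)⁻¹ = fun n => g⁻¹ ^ n.choose r :=
      funext fun n => (inv_pow g _).symm
    exact hinv ▸ pow b r g⁻¹ (inv_mem hg) hab hdr hrs
  | one => exact one
  | mul _ _ hf₁ hf₂ h₁ h₂ => exact mul _ _ hf₁ hf₂ h₁ h₂

theorem apply_eq_one {N : ℕ}
    (hN : ∀ ⦃b r : ℕ⦄ ⦃g : G⦄, 2 ≤ b → g ∈ M b → r ≠ 0 → r ≤ b → g ^ N.choose r = 1)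
    {f : ℕ → G} (hf : f ∈ binomialWords M 2 1 0) : f N = 1 := by
  refine (closure_le ((⊥ : Subgroup G).comap (Pi.evalMonoidHom (fun _ => G) N))).2 ?_ hf
  rintro _ ⟨b, r, g, hg, hb, hr, hrb, rfl⟩
  exact hN hb hg (by omega) (by omega)

end binomialWords

def leftProd (f : ℕ → G) : ℕ → G
  | 0 => 1
  | n + 1 => f n * leftProd f n

@[simp] theorem leftProd_zero (f : ℕ → G) : leftProd f 0 = 1 := rfl

theorem leftProd_succ (f : ℕ → G) (n : ℕ) : leftProd f (n + 1) = f n * leftProd f n := rfl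

@[simp] theorem leftProd_one : leftProd (1 : ℕ → G) = 1 := by
  funext n; induction n with
  | zero => rfl
  | succ n ih => simp [leftProd_succ, ih]

theorem leftProd_mul (f f' : ℕ → G) :
    leftProd (f * f') = leftProd f * leftProd ((leftProd f)⁻¹ * f' * leftProd f) := by
  funext n; induction n with
  | zero => simp
  | succ n ih =>
    simp only [leftProd_succ, Pi.mul_apply, Pi.inv_apply] at ih ⊢
    rw [ih]
    group

theorem leftProd_pow_choose (g : G) (r : ℕ) :
    leftProd (fun n => g ^ n.choose r) = fun n => g ^ n.choose (r + 1) := by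
  funext n; induction n with
  | zero => simp
  | succ n ih => rw [leftProd_succ, ih, ← pow_add, Nat.choose_succ_succ']

theorem eq_leftProd_mul_inv_leftProd {F pre suf : ℕ → G} (h₀ : F 0 = 1)
    (h : ∀ n, F (n + 1) = pre n * F n * suf n) : F = leftProd pre * (leftProd suf⁻¹)⁻¹ := by
  funext n; induction n with
  | zero => simp [h₀]
  | succ n ih =>
    simp only [leftProd_succ, Pi.mul_apply, Pi.inv_apply] at ih ⊢
    rw [h, ih]
    group

section Closure

variable {M : ℕ → Subgroup G} {T : ℕ}

open binomialWords

def ConjLeftProdMem (M : ℕ → Subgroup G) (T φ : ℕ) : Prop :=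
  ∀ ⦃a d s : ℕ⦄ ⦃f c : ℕ → G⦄, 1 ≤ a → T ≤ a + φ → f ∈ binomialWords M a d (s + 1) →
    c ∈ binomialWords M 1 0 0 → leftProd (c⁻¹ * f * c) ∈ binomialWords M a (d + 1) s

def CommutatorMem (M : ℕ → Subgroup G) (T φ : ℕ) : Prop :=
  ∀ ⦃a a' d d' s s' : ℕ⦄ ⦃f f' : ℕ → G⦄, 1 ≤ a → 1 ≤ a' → T ≤ a + a' + φ →
    f ∈ binomialWords M a d s → f' ∈ binomialWords M a' d' s' →
    ⁅f, f'⁆ ∈ binomialWords M (a + a') (max d d') (s + s')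

theorem ConjLeftProdMem.leftProd_mem {φ : ℕ} (hC : ConjLeftProdMem M T φ) {a d s : ℕ}
    {f : ℕ → G} (ha : 1 ≤ a) (hT : T ≤ a + φ) (hf : f ∈ binomialWords M a d (s + 1)) :
    leftProd f ∈ binomialWords M a (d + 1) s := by
  simpa using hC ha hT hf (one_mem _)

theorem conjLeftProdMem_zero (hM : Antitone M) (hT : M T = ⊥) : ConjLeftProdMem M T 0 := by
  intro a d s f c _ hTa hf _
  rw [eq_one_of_le hM hT hTa hf]
  simp

theorem commutatorMem_zero (hM : IsStronglyCentralFiltration M) (hT : M T = ⊥) :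
    CommutatorMem M T 0 := by
  intro a a' d d' s s' f f' _ _ hTa hf hf'
  have hcomm : ⁅f, f'⁆ = 1 := funext fun n => show ⁅f n, f' n⁆ = 1 by
    simpa [hT] using hM.antitone (by simpa using hTa : T ≤ a + a')
      (hM.commutator_mem (apply_mem hM.antitone hf n) (apply_mem hM.antitone hf' n))
  rw [hcomm]
  exact one_mem _

variable {φ : ℕ}

theorem CommutatorMem.commutator_mul_left_mem (hB : CommutatorMem M T φ) {a c D S : ℕ}
    {x z w : ℕ → G} (ha : 1 ≤ a) (hc : 1 ≤ c) (hT : T ≤ c + a + φ)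
    (hx : x ∈ binomialWords M a 0 0) (hxw : ⁅x, w⁆ ∈ binomialWords M c D S)
    (hzw : ⁅z, w⁆ ∈ binomialWords M c D S) : ⁅x * z, w⁆ ∈ binomialWords M c D S := by
  have h : ⁅⁅z, w⁆⁻¹, x⁆ ∈ binomialWords M (c + a) (max D 0) (S + 0) :=
    hB hc ha hT (inv_mem hzw) hx
  rw [commutatorElement_mul_left_eq_mul_commutatorElement]
  exact mul_mem (mul_mem hzw (mono (by omega) (by omega) le_rfl h)) hxw

theorem CommutatorMem.commutator_mul_right_mem (hB : CommutatorMem M T φ) {a c D S : ℕ}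
    {x u v : ℕ → G} (ha : 1 ≤ a) (hc : 1 ≤ c) (hT : T ≤ c + a + φ)
    (hu : u ∈ binomialWords M a 0 0) (hxu : ⁅x, u⁆ ∈ binomialWords M c D S)
    (hxv : ⁅x, v⁆ ∈ binomialWords M c D S) : ⁅x, u * v⁆ ∈ binomialWords M c D S := by
  have h : ⁅⁅x, v⁆⁻¹, u⁆ ∈ binomialWords M (c + a) (max D 0) (S + 0) :=
    hB hc ha hT (inv_mem hxv) hu
  rw [commutatorElement_mul_right_eq_mul_commutatorElement]
  exact mul_mem hxu (mul_mem hxv (mono (by omega) (by omega) le_rfl h))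

theorem conjLeftProdMem_succ (hC : ConjLeftProdMem M T φ) (hB : CommutatorMem M T φ) :
    ConjLeftProdMem M T (φ + 1) := by
  intro a d s f c ha hT hf
  revert c
  refine binomialWords.induction ?_ ?_ ?_ hf
  · intro _ _; simp
  · intro b r g hg hab hdr hrs c hc
    have hP := pow_choose_mem (s := s + 1) hg hab hdr hrs
    have hLP : leftProd (fun n => g ^ n.choose r) ∈ binomialWords M a (d + 1) s :=
      leftProd_pow_choose g r ▸ pow_choose_mem hg hab (by omega) (by omega)
    set P : ℕ → G := fun n => g ^ n.choose r
    have hQ' : ⁅P⁻¹, c⁻¹⁆ ∈ binomialWords M (a + 1) (max d 0) (s + 1 + 0) :=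
      hB ha le_rfl (by omega) (inv_mem hP) (inv_mem hc)
    have hQ : ⁅P⁻¹, c⁻¹⁆ ∈ binomialWords M (a + 1) d (s + 1) := by simpa using hQ'
    have hR : leftProd ((leftProd P)⁻¹ * ⁅P⁻¹, c⁻¹⁆ * leftProd P) ∈
        binomialWords M (a + 1) (d + 1) s :=
      hC (by omega) (by omega) hQ (mono ha (Nat.zero_le _) (Nat.zero_le _) hLP)
    rw [inv_mul_mul_eq_mul_commutatorElement, leftProd_mul]
    exact mul_mem hLP (mono (Nat.le_succ a) le_rfl le_rfl hR)
  · intro f₁ f₂ _ _ ih₁ ih₂ c hc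
    set L := leftProd (c⁻¹ * f₁ * c)
    have h₁ : L ∈ binomialWords M a (d + 1) s := ih₁ hc
    have h₂ := ih₂ (c := c * L) (mul_mem hc (mono ha (Nat.zero_le _) (Nat.zero_le _) h₁))
    have hconj : (c * L)⁻¹ * f₂ * (c * L) = L⁻¹ * (c⁻¹ * f₂ * c) * L := by group
    rw [hconj] at h₂
    rw [show c⁻¹ * (f₁ * f₂) * c = c⁻¹ * f₁ * c * (c⁻¹ * f₂ * c) by group, leftProd_mul]
    exact mul_mem h₁ h₂

theorem commutator_mem_of_succ_eq_mul (hC : ConjLeftProdMem M T (φ + 1))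
    (hB : CommutatorMem M T φ) {b b' D s : ℕ} {A B α β : ℕ → G} (hb : 1 ≤ b) (hb' : 1 ≤ b')
    (hT : T ≤ b + b' + (φ + 1)) (hA : A ∈ binomialWords M b 0 0)
    (hB' : B ∈ binomialWords M b' 0 0) (hA₀ : A 0 = 1) (hAα : ∀ n, A (n + 1) = A n * α n)
    (hBβ : ∀ n, B (n + 1) = B n * β n)
    (hαB : ⁅α, fun n => B (n + 1)⁆ ∈ binomialWords M (b + b') D (s + 1))
    (hAβ : ⁅A, β⁆ ∈ binomialWords M (b + b') D (s + 1)) :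
    ⁅A, B⁆ ∈ binomialWords M (b + b') (D + 1) s := by
  set pre : ℕ → G := ⁅α, fun n => B (n + 1)⁆ * ⁅⁅α, fun n => B (n + 1)⁆⁻¹, A⁆
  set suf : ℕ → G := ⁅A, β⁆ * ⁅⁅A, β⁆⁻¹, B⁆
  have hpre : pre ∈ binomialWords M (b + b') D (s + 1) := by
    have h : ⁅⁅α, fun n => B (n + 1)⁆⁻¹, A⁆ ∈ binomialWords M (b + b' + b) (max D 0) (s + 1 + 0) :=
      hB (by omega) hb (by omega) (inv_mem hαB) hA
    exact mul_mem hαB (mono (by omega) (by omega) le_rfl h)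
  have hsuf : suf ∈ binomialWords M (b + b') D (s + 1) := by
    have h : ⁅⁅A, β⁆⁻¹, B⁆ ∈ binomialWords M (b + b' + b') (max D 0) (s + 1 + 0) :=
      hB (by omega) hb' (by omega) (inv_mem hAβ) hB'
    exact mul_mem hAβ (mono (by omega) (by omega) le_rfl h)
  have hrec : ∀ n, ⁅A (n + 1), B (n + 1)⁆ = pre n * ⁅A n, B n⁆ * suf n := fun n => by
    have hsuf : ⁅A n, B (n + 1)⁆ = ⁅A n, B n⁆ * suf n := by
      rw [hBβ, commutatorElement_mul_right_eq_mul_commutatorElement]; rfl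
    rw [hAα, commutatorElement_mul_left_eq_mul_commutatorElement, hsuf, ← mul_assoc]
    rfl
  have hF : ⁅A, B⁆ = leftProd pre * (leftProd suf⁻¹)⁻¹ :=
    eq_leftProd_mul_inv_leftProd (F := fun n => ⁅A n, B n⁆)
      (by simp [hA₀]) hrec
  rw [hF]
  exact mul_mem (hC.leftProd_mem (by omega) (by omega) hpre)
    (inv_mem (hC.leftProd_mem (by omega) (by omega) (inv_mem hsuf)))

theorem commutator_pow_choose_succ_mem (hC : ConjLeftProdMem M T (φ + 1))
    (hB : CommutatorMem M T φ) {N : ℕ}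
    (ih : ∀ ⦃i j b b' s s' : ℕ⦄ ⦃g h : G⦄, i + j ≤ N → g ∈ M b → h ∈ M b' → 1 ≤ b → 1 ≤ b' →
      T ≤ b + b' + (φ + 1) → i + s ≤ b → j + s' ≤ b' →
      ⁅fun n : ℕ => g ^ n.choose i, fun n => h ^ n.choose j⁆ ∈
        binomialWords M (b + b') (max i j) (s + s'))
    {i j b b' s s' : ℕ} {g h : G} (hN : i + j ≤ N) (hg : g ∈ M b) (hh : h ∈ M b')
    (hb : 1 ≤ b) (hb' : 1 ≤ b') (hT : T ≤ b + b' + (φ + 1)) (hs : i + 1 + s ≤ b)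
    (hs' : j + s' ≤ b') :
    ⁅fun n : ℕ => g ^ n.choose (i + 1), fun n => h ^ n.choose j⁆ ∈
      binomialWords M (b + b') (max (i + 1) j) (s + s') := by
  set A : ℕ → G := fun n => g ^ n.choose (i + 1)
  set α : ℕ → G := fun n => g ^ n.choose i
  set B : ℕ → G := fun n => h ^ n.choose j
  have hA : A ∈ binomialWords M b 0 0 := pow_choose_mem hg le_rfl (Nat.zero_le _) (by omega)
  have hB' : B ∈ binomialWords M b' 0 0 := pow_choose_mem hh le_rfl (Nat.zero_le _) (by omega)
  have hA₀ : A 0 = 1 := by simp [A]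
  have hAα : ∀ n, A (n + 1) = A n * α n := fun n => by
    simp only [A, α]; rw [Nat.choose_succ_succ', add_comm, pow_add]
  rcases j with _ | j
  · have hαB : ⁅α, fun n => B (n + 1)⁆ ∈ binomialWords M (b + b') i (s + s' + 1) := by
      have h := ih (i := i) (j := 0) (s := s + 1) (s' := s') (by omega) hg hh hb hb' hT
        (by omega) hs'
      rw [show (fun n => B (n + 1)) = B from funext fun n => by simp [B]]
      exact mono le_rfl (by omega) (by omega) h
    have hA1 : ⁅A, 1⁆ ∈ binomialWords M (b + b') i (s + s' + 1) := by simp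
    have key := commutator_mem_of_succ_eq_mul hC hB hb hb' hT hA hB' hA₀ hAα
      (fun n => by simp [B]) hαB hA1
    exact mono le_rfl (by omega) le_rfl key
  · set β : ℕ → G := fun n => h ^ n.choose j
    have hBβ : ∀ n, B (n + 1) = B n * β n := fun n => by
      simp only [B, β]; rw [Nat.choose_succ_succ', add_comm, pow_add]
    have hαB : ⁅α, fun n => B (n + 1)⁆ ∈
        binomialWords M (b + b') (max i j) (s + s' + 1) := by
      have h₁ := ih (i := i) (j := j + 1) (s := s + 1) (s' := s') (by omega) hg hh hb hb' hT
        (by omega) hs'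
      have h₂ := ih (i := i) (j := j) (s := s + 1) (s' := s' + 1) (by omega) hg hh hb hb' hT
        (by omega) (by omega)
      rw [show (fun n => B (n + 1)) = B * β from funext hBβ]
      exact hB.commutator_mul_right_mem hb' (by omega) (by omega) hB'
        (mono le_rfl (by omega) (by omega) h₁) (mono le_rfl le_rfl (by omega) h₂)
    have hAβ : ⁅A, β⁆ ∈ binomialWords M (b + b') (max i j) (s + s' + 1) := by
      have h := ih (i := i + 1) (j := j) (s := s) (s' := s' + 1) (by omega) hg hh hb hb' hT
        hs (by omega)
      exact mono le_rfl (by omega) (by omega) h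
    have key := commutator_mem_of_succ_eq_mul hC hB hb hb' hT hA hB' hA₀ hAα hBβ hαB hAβ
    exact mono le_rfl (by omega) le_rfl key

theorem commutator_pow_choose_mem (hM : IsStronglyCentralFiltration M)
    (hC : ConjLeftProdMem M T (φ + 1)) (hB : CommutatorMem M T φ) (N : ℕ) :
    ∀ ⦃i j b b' s s' : ℕ⦄ ⦃g h : G⦄, i + j ≤ N → g ∈ M b → h ∈ M b' → 1 ≤ b → 1 ≤ b' →
      T ≤ b + b' + (φ + 1) → i + s ≤ b → j + s' ≤ b' →
      ⁅fun n : ℕ => g ^ n.choose i, fun n : ℕ => h ^ n.choose j⁆ ∈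
        binomialWords M (b + b') (max i j) (s + s') := by
  induction N with
  | zero =>
    intro i j b b' s s' g h hN hg hh _ _ _ _ _
    obtain ⟨rfl, rfl⟩ : i = 0 ∧ j = 0 := by omega
    have hconst : ⁅fun n : ℕ => g ^ n.choose 0, fun n : ℕ => h ^ n.choose 0⁆ = fun _ => ⁅g, h⁆ :=
      funext fun n => show ⁅g ^ n.choose 0, h ^ n.choose 0⁆ = ⁅g, h⁆ by simp
    rw [hconst]
    exact const_mem (hM.commutator_mem hg hh) le_rfl (by omega)
  | succ N ih =>
    intro i j b b' s s' g h hN hg hh hb hb' hT hs hs'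
    rcases i with _ | i
    · rcases j with _ | j
      · exact ih (by omega) hg hh hb hb' hT hs hs'
      · rw [← commutatorElement_inv, add_comm b, add_comm s, max_comm]
        exact inv_mem (commutator_pow_choose_succ_mem hC hB ih (by omega) hh hg hb' hb
          (by omega) hs' hs)
    · exact commutator_pow_choose_succ_mem hC hB ih (by omega) hg hh hb hb' hT hs hs'

theorem commutatorMem_succ (hM : IsStronglyCentralFiltration M)
    (hC : ConjLeftProdMem M T (φ + 1)) (hB : CommutatorMem M T φ) :
    CommutatorMem M T (φ + 1) := by
  intro a a' d d' s s' f f' ha ha' hT hf hf'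
  refine binomialWords.induction ?_ ?_ ?_ hf
  · simp
  · intro b r g hg hab hdr hrs
    refine binomialWords.induction ?_ ?_ ?_ hf'
    · simp
    · intro b' r' h hh hab' hdr' hrs'
      exact mono (by omega) (by omega) (by omega) (commutator_pow_choose_mem hM hC hB _ le_rfl
        hg hh (by omega) (by omega) (by omega) hrs hrs')
    · intro f₁ f₂ hf₁ _ ih₁ ih₂
      exact hB.commutator_mul_right_mem ha' (by omega) (by omega)
        (mono le_rfl (Nat.zero_le _) (Nat.zero_le _) hf₁) ih₁ ih₂
  · intro f₁ f₂ hf₁ _ ih₁ ih₂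
    exact hB.commutator_mul_left_mem ha (by omega) (by omega)
      (mono le_rfl (Nat.zero_le _) (Nat.zero_le _) hf₁) ih₁ ih₂

theorem conjLeftProdMem_and_commutatorMem (hM : IsStronglyCentralFiltration M) (hT : M T = ⊥) :
    ∀ φ, ConjLeftProdMem M T φ ∧ CommutatorMem M T φ
  | 0 => ⟨conjLeftProdMem_zero hM.antitone hT, commutatorMem_zero hM hT⟩
  | φ + 1 =>
    have ⟨hC, hB⟩ := conjLeftProdMem_and_commutatorMem hM hT φ
    have hC' := conjLeftProdMem_succ hC hB
    ⟨hC', commutatorMem_succ hM hC' hB⟩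

end Closure

namespace binomialWords

variable {M : ℕ → Subgroup G} {T : ℕ} (hM : IsStronglyCentralFiltration M) (hT : M T = ⊥)
include hM hT

theorem leftProd_conj_mem {a d s : ℕ} {f c : ℕ → G} (ha : 1 ≤ a)
    (hf : f ∈ binomialWords M a d (s + 1)) (hc : c ∈ binomialWords M 1 0 0) :
    leftProd (c⁻¹ * f * c) ∈ binomialWords M a (d + 1) s :=
  (conjLeftProdMem_and_commutatorMem hM hT T).1 ha (by omega) hf hc

theorem commutator_pow_mem {b : ℕ} {g : G} (hb : 1 ≤ b) (hg : g ∈ M b) (y : G) :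
    (fun n => ⁅g, y ^ n⁆) ∈ binomialWords M (b + 1) 1 b := by
  obtain ⟨φ, hφ⟩ : ∃ φ, T ≤ b + φ := ⟨T, by omega⟩
  induction φ generalizing b g with
  | zero =>
    have h : (fun n => ⁅g, y ^ n⁆) = 1 := funext fun n => by
      simpa [hT] using hM.antitone (by omega : T ≤ b + 1) (hM.commutator_mem_succ (y ^ n) hg)
    rw [h]; exact one_mem _
  | succ φ ih =>
    set suf : ℕ → G := fun n => ⁅g, y⁆ * ⁅⁅g, y⁆⁻¹, y ^ n⁆
    have hsuf : suf ∈ binomialWords M (b + 1) 0 (b + 1) := by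
      have hgy := hM.commutator_mem_succ y hg
      exact mul_mem (const_mem hgy le_rfl le_rfl)
        (mono (by omega) (Nat.zero_le _) le_rfl (ih (by omega) (inv_mem hgy) (by omega)))
    have hF : (fun n => ⁅g, y ^ n⁆) = leftProd 1 * (leftProd suf⁻¹)⁻¹ :=
      eq_leftProd_mul_inv_leftProd (by simp) fun n => by
        rw [pow_succ, commutatorElement_mul_right_eq_mul_commutatorElement]; simp [suf]
    rw [hF, leftProd_one, one_mul]
    exact inv_mem (by simpa using leftProd_conj_mem hM hT (by omega) (inv_mem hsuf) (one_mem _))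

end binomialWords

namespace IsStronglyCentralFiltration

open binomialWords

variable {M : ℕ → Subgroup G} {T : ℕ} (hM : IsStronglyCentralFiltration M) (hT : M T = ⊥)
include hM hT

theorem exists_mul_pow_eq (u : G) {v : G} (hv : v ∈ M 1) :
    ∃ τ ∈ binomialWords M 2 2 0, ∀ n, (u * v) ^ n = u ^ n * v ^ n * τ n := by
  set c : ℕ → G := fun n => v ^ n
  have hc : c ∈ binomialWords M 1 0 0 := by
    simpa [c] using pow_choose_mem (a := 1) (d := 0) (s := 0) (r := 1) hv le_rfl
      (Nat.zero_le _) le_rfl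
  refine ⟨_, leftProd_conj_mem hM hT (by omega)
    (commutator_pow_mem hM hT le_rfl (inv_mem hv) u⁻¹) hc, fun n => ?_⟩
  induction n with
  | zero => simp
  | succ n ih =>
    rw [pow_succ', ih, leftProd_succ]
    simp only [Pi.mul_apply, Pi.inv_apply, c, commutatorElement_def]
    group

theorem mul_pow_eq_of_pow_choose_eq_one {N : ℕ}
    (hN : ∀ ⦃b r : ℕ⦄ ⦃g : G⦄, 2 ≤ b → g ∈ M b → r ≠ 0 → r ≤ b → g ^ N.choose r = 1)
    (u : G) {v : G} (hv : v ∈ M 1) : (u * v) ^ N = u ^ N * v ^ N := by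
  obtain ⟨τ, hτ, h⟩ := hM.exists_mul_pow_eq hT u hv
  rw [h, apply_eq_one hN (mono le_rfl (by omega) le_rfl hτ), mul_one]

theorem commutator_pow_eq_of_pow_choose_eq_one {N : ℕ}
    (hN : ∀ ⦃b r : ℕ⦄ ⦃g : G⦄, 2 ≤ b → g ∈ M b → r ≠ 0 → r ≤ b → g ^ N.choose r = 1)
    {x z : G} (hxz : ⁅x, z⁆ ∈ M 1) : ⁅x ^ N, z⁆ = ⁅x, z⁆ ^ N := by
  have hconj : x⁻¹ * ⁅x, z⁆ = z * x⁻¹ * z⁻¹ := by simp only [commutatorElement_def]; group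
  calc ⁅x ^ N, z⁆ = x ^ N * (x⁻¹ * ⁅x, z⁆) ^ N := by
        rw [hconj, conj_pow, commutatorElement_def, inv_pow]; group
    _ = ⁅x, z⁆ ^ N := by
        rw [hM.mul_pow_eq_of_pow_choose_eq_one hT hN _ hxz, inv_pow, mul_inv_cancel_left]

end IsStronglyCentralFiltration

theorem pow_choose_prime_pow_eq_one {p c t r : ℕ} (hp : p.Prime) {g : G} (hg : g ^ p ^ c = 1)
    (hr : r ≠ 0) (h : c + Nat.log p r ≤ t) : g ^ (p ^ t).choose r = 1 := by
  obtain ⟨d, hd⟩ := (pow_dvd_pow p (by omega : c ≤ t - Nat.log p r)).trans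
    (Nat.pow_sub_log_dvd_choose_prime_pow hp t hr)
  rw [hd, pow_mul, hg, one_pow]

theorem isStronglyCentralFiltration_lowerCentralSeries (i : ℕ) :
    IsStronglyCentralFiltration fun b => (⊤ : Subgroup G).lowerCentralSeries (i + b) where
  antitone _ _ h := Subgroup.lowerCentralSeries_antitone ⊤ (by omega)
  commutator_mem {a b} _ _ hg hh :=
    Subgroup.lowerCentralSeries_antitone ⊤ (by omega : i + (a + b) ≤ i + a + (i + b) + 1)
      (commutator_lowerCentralSeries_le _ _ (commutator_mem_commutator hg hh))
  commutator_mem_succ y hg := commutator_mem_commutator hg (mem_top y)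

theorem pow_choose_eq_one_of_mem_lowerCentralSeries {p e k i b r : ℕ} (hp : p.Prime)
    (hk : (⊤ : Subgroup G).lowerCentralSeries (k + 1) = ⊥)
    (ih : ∀ ⦃j : ℕ⦄ ⦃g : G⦄, i < j → j < k → g ∈ (⊤ : Subgroup G).lowerCentralSeries (j + 1) →
      g ^ p ^ (e + Nat.log p k * (k - (j + 1))) = 1)
    {g : G} (hb : 2 ≤ b) (hg : g ∈ (⊤ : Subgroup G).lowerCentralSeries (i + b)) (hr : r ≠ 0)
    (hrb : r ≤ b) : g ^ (p ^ (e + Nat.log p k * (k - (i + 1)))).choose r = 1 := by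
  rcases lt_or_ge k (i + b) with hkb | hkb
  · have h := Subgroup.lowerCentralSeries_antitone ⊤ (show k + 1 ≤ i + b from hkb) hg
    rw [hk, mem_bot] at h
    rw [h, one_pow]
  obtain ⟨j, hj⟩ : ∃ j, i + b = j + 1 := ⟨i + b - 1, by omega⟩
  rw [hj] at hg
  refine pow_choose_prime_pow_eq_one hp (ih (by omega) (by omega) hg) hr ?_
  set m := Nat.log p k
  have hlog : Nat.log p r ≤ m := Nat.log_mono_right (by omega)
  have hsplit : m * (k - (i + 1)) = m * (k - (j + 1)) + m * (b - 1) := by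
    rw [← mul_add]; congr 1; omega
  have hm : m ≤ m * (b - 1) := Nat.le_mul_of_pos_right m (by omega)
  omega

theorem pow_eq_one_of_mem_lowerCentralSeries {p e k : ℕ} (hp : p.Prime)
    (hcen : ∀ x : G, x ^ p ^ e ∈ center G)
    (hk : (⊤ : Subgroup G).lowerCentralSeries k ≤ center G) (i : ℕ) {w : G}
    (hw : w ∈ (⊤ : Subgroup G).lowerCentralSeries (i + 1)) :
    w ^ p ^ (e + Nat.log p k * (k - (i + 1))) = 1 := by
  induction hik : k - i using Nat.strong_induction_on generalizing i w with
  | _ t ih =>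
  set N := p ^ (e + Nat.log p k * (k - (i + 1)))
  have hbot := Subgroup.lowerCentralSeries_succ_eq_bot ⊤ hk
  have hM := isStronglyCentralFiltration_lowerCentralSeries (G := G) i
  have hT : (⊤ : Subgroup G).lowerCentralSeries (i + (k + 1)) = ⊥ :=
    eq_bot_iff.2 fun g hg => hbot ▸ Subgroup.lowerCentralSeries_antitone ⊤ (by omega) hg
  have hN : ∀ ⦃b r : ℕ⦄ ⦃g : G⦄, 2 ≤ b → g ∈ (⊤ : Subgroup G).lowerCentralSeries (i + b) →
      r ≠ 0 → r ≤ b → g ^ N.choose r = 1 :=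
    fun b r g => pow_choose_eq_one_of_mem_lowerCentralSeries hp hbot
      (fun j _ hij hjk hg => ih (k - j) (by omega) j hg rfl)
  have hcentral : ∀ y : G, y ^ N ∈ center G := fun y => by
    simp only [N, pow_add, pow_mul]; exact pow_mem (hcen y) _
  have hL : (⊤ : Subgroup G).lowerCentralSeries (i + 1) = closure
      {g | ∃ z ∈ (⊤ : Subgroup G).lowerCentralSeries i, ∃ y ∈ (⊤ : Subgroup G), ⁅z, y⁆ = g} := by
    rw [Subgroup.lowerCentralSeries_succ, Subgroup.commutator_def]
  rw [hL] at hw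
  induction hw using closure_induction with
  | mem _ hg =>
    obtain ⟨z, hz, y, -, rfl⟩ := hg
    have hyz : ⁅y, z⁆ ∈ (⊤ : Subgroup G).lowerCentralSeries (i + 1) := by
      rw [← commutatorElement_inv]; exact inv_mem (commutator_mem_commutator hz (mem_top y))
    rw [← commutatorElement_inv, inv_pow, ← hM.commutator_pow_eq_of_pow_choose_eq_one hT hN hyz,
      commutatorElement_eq_one_iff_mul_comm.2 ((mem_center_iff.1 (hcentral y) z).symm), inv_one]
  | one => exact one_pow _
  | mul x y hx hy ihx ihy =>
    rw [hM.mul_pow_eq_of_pow_choose_eq_one hT hN x (hL ▸ hy), ihx, ihy, one_mul]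
  | inv x _ ihx => rw [inv_pow, ihx, inv_one]

theorem QuotientGroup.mk_mem_center_of_mem {N : Subgroup G} [N.Normal] {r : G} (hr : r ∈ N) :
    (r : G ⧸ ⁅N, (⊤ : Subgroup G)⁆) ∈ center (G ⧸ ⁅N, (⊤ : Subgroup G)⁆) := by
  refine mem_center_iff.2 fun q => QuotientGroup.induction_on q fun x => ?_
  have h := (QuotientGroup.eq_one_iff _).2 (commutator_mem_commutator hr (mem_top x))
  rw [commutatorElement_def, QuotientGroup.mk_mul, QuotientGroup.mk_mul, QuotientGroup.mk_mul,
    QuotientGroup.mk_inv, QuotientGroup.mk_inv, mul_inv_eq_one, mul_inv_eq_iff_eq_mul] at h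
  exact h.symm

end

theorem pow_mem_commutator_of_mem_commutatorSubgroup_general {F : Type*} [Group F]
    (R : Subgroup F) [R.Normal] (p e k : ℕ) (hp : p.Prime)
    (hnil : (⊤ : Subgroup F).lowerCentralSeries k ≤ R)
    (hexp : ∀ x : F, x ^ (p ^ e) ∈ R)
    (g : F) (hg : g ∈ commutator F) :
    g ^ (p ^ (e + Nat.log p k * (k - 1))) ∈ ⁅R, (⊤ : Subgroup F)⁆ := by
  set π := QuotientGroup.mk' ⁅R, (⊤ : Subgroup F)⁆
  have hmap : ∀ n, ((⊤ : Subgroup F).lowerCentralSeries n).map π =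
      (⊤ : Subgroup (F ⧸ ⁅R, (⊤ : Subgroup F)⁆)).lowerCentralSeries n := fun n => by
    rw [Subgroup.map_lowerCentralSeries,
      Subgroup.map_top_of_surjective _ (QuotientGroup.mk'_surjective _)]
  have hk : (⊤ : Subgroup (F ⧸ ⁅R, (⊤ : Subgroup F)⁆)).lowerCentralSeries k ≤ Subgroup.center _ := by
    rw [← hmap]
    rintro _ ⟨x, hx, rfl⟩
    exact QuotientGroup.mk_mem_center_of_mem (hnil hx)
  have hg' : π g ∈ (⊤ : Subgroup (F ⧸ ⁅R, (⊤ : Subgroup F)⁆)).lowerCentralSeries (0 + 1) := by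
    rw [← hmap, Subgroup.top_lowerCentralSeries_one]
    exact Subgroup.mem_map_of_mem π hg
  have h := pow_eq_one_of_mem_lowerCentralSeries hp
    (fun x => QuotientGroup.induction_on x fun x => QuotientGroup.mk_mem_center_of_mem (hexp x))
    hk 0 hg'
  rwa [← map_pow, QuotientGroup.mk'_apply, QuotientGroup.eq_one_iff] at h

/-- Theorem 3.2 in the case `c = 1`: if `γ_{k+1}(F) ≤ R` and `x^(p^e) ∈ R` for
all `x ∈ F`, then every `g ∈ ⁅F, F⁆` satisfies `g^(p^(e + m(k-1))) ∈ ⁅R, F⁆`,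
where `m = ⌊log_p k⌋`. -/
theorem pow_mem_commutator_of_mem_commutatorSubgroup {F : Type*} [Group F]
    [IsFreeGroup F] (R : Subgroup F) [R.Normal] (p e k : ℕ) (hp : p.Prime)
    (he : 1 ≤ e) (hk : 1 ≤ k)
    (hnil : (⊤ : Subgroup F).lowerCentralSeries k ≤ R)
    (hexp : ∀ x : F, x ^ (p ^ e) ∈ R)
    (g : F) (hg : g ∈ commutator F) :
    g ^ (p ^ (e + Nat.log p k * (k - 1))) ∈ ⁅R, (⊤ : Subgroup F)⁆ :=
  pow_mem_commutator_of_mem_commutatorSubgroup_general R p e k hp hnil hexp g hg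
end

section
/- Let p be a prime and e ≥ 1 an integer, and let G be a p-group of nilpotency class at most p−1 and exponent dividing p^e, presented as G = F/R with F a free group and R a normal subgroup; equivalently, γ_p(F) ≤ R and x^(p^e) ∈ R for every x ∈ F. Then for every g ∈ R ∩ ⁅F, F⁆, one has g^(p^e) ∈ ⁅R, F⁆; that is, the exponent of the Schur multiplier M(G) = (R ∩ ⁅F, F⁆)/⁅R, F⁆ divides exp(G). -/
/-!
Put `Q = F ⧸ ⁅R, F⁆`. Then `γ_{p+1}(Q) = 1` and every `p^e`-th power is central in `Q`, and we show
by descending induction on `i ≥ 2` that `γ_i(Q)` has exponent dividing `p^e`.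

The step rests on a Hall–Petresco type identity. If `G` is an N-series (`⁅G a, G b⁆ ≤ G (a + b)`)
with `G c = 1` and `x, y ∈ G 1`, then the sequence `n ↦ (x^n y^n)⁻¹ (x y)^n` has its `k`-th
multiplicative forward difference in `G k`, so peeling off binomial terms `a_k ^ (n.choose k)`,
`a_k ∈ G k`, writes `(x y)^N` as `x^N y^N` times such terms with `2 ≤ k < c`. For `N = p^e` and
`c = p` all these binomial coefficients are divisible by `p^e`. Taking for `G` the lower central
series of `S = γ_i(Q)` shows that `x ↦ x^(p^e)` is multiplicative on `γ_i(Q)`; taking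
`S = ⟨z⁻¹, ⁅z, q⁆⟩` with `z ∈ γ_{i-1}(Q)`, where `z⁻¹ ⁅z, q⁆` is conjugate to `z⁻¹` and `p^e`-th
powers are central, gives `⁅z, q⁆^(p^e) = 1`. Both cases need the induction hypothesis only on
`γ_{i+1}(Q)`, which contains `⁅S, S⁆`.
-/

open scoped commutatorElement

section NSeries

variable {H : Type*} [Group H]

structure IsNSeries (G : ℕ → Subgroup H) : Prop where
  antitone : Antitone G
  commutator_le (a b : ℕ) : ⁅G a, G b⁆ ≤ G (a + b)

theorem IsNSeries.commutator_mem {G : ℕ → Subgroup H} (hG : IsNSeries G) {a b : ℕ} {x y : H}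
    (hx : x ∈ G a) (hy : y ∈ G b) : ⁅x, y⁆ ∈ G (a + b) :=
  hG.commutator_le a b (Subgroup.commutator_mem_commutator hx hy)

def mulFwdDiff (f : ℕ → H) : ℕ → H := fun n => (f n)⁻¹ * f (n + 1)

theorem mulFwdDiff_const (a : H) : mulFwdDiff (fun _ : ℕ => a) = 1 := by
  funext n; simp [mulFwdDiff]

theorem mulFwdDiff_pow_choose_succ (a : H) (k : ℕ) :
    mulFwdDiff (fun n => a ^ n.choose (k + 1)) = fun n => a ^ n.choose k := by
  funext n
  rw [mulFwdDiff, Nat.choose_succ_succ', pow_add, (Commute.pow_pow_self a _ _).eq,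
    inv_mul_cancel_left]

theorem mulFwdDiff_mul (f g : ℕ → H) :
    mulFwdDiff (f * g) = ⁅g⁻¹, mulFwdDiff f⁆ * mulFwdDiff f * mulFwdDiff g := by
  funext n; simp only [mulFwdDiff, Pi.mul_apply, Pi.inv_apply, commutatorElement_def]; group

theorem mulFwdDiff_inv (f : ℕ → H) :
    mulFwdDiff f⁻¹ = ⁅f, (mulFwdDiff f)⁻¹⁆ * (mulFwdDiff f)⁻¹ := by
  funext n; simp only [mulFwdDiff, Pi.mul_apply, Pi.inv_apply, commutatorElement_def]; group

theorem mulFwdDiff_commutator (u v : ℕ → H) :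
    mulFwdDiff ⁅u, v⁆ = ⁅v, u⁆ * (u * ⁅mulFwdDiff u, v⁆ * u⁻¹) * ⁅v, u⁆⁻¹ *
      (v * ⁅fun n => u (n + 1), mulFwdDiff v⁆ * v⁻¹) := by
  funext n; simp only [mulFwdDiff, Pi.mul_apply, Pi.inv_apply, commutatorElement_def]; group

/-- `DiffsMem G j m f`: the `k`-th iterated `mulFwdDiff` of `f` takes values in `G (m + k)` for
every `k ≤ j`. -/
def DiffsMem (G : ℕ → Subgroup H) : ℕ → ℕ → (ℕ → H) → Prop
  | 0, m, f => ∀ n, f n ∈ G m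
  | j + 1, m, f => (∀ n, f n ∈ G m) ∧ DiffsMem G j (m + 1) (mulFwdDiff f)

def IsPolySeq (G : ℕ → Subgroup H) (m : ℕ) (f : ℕ → H) : Prop := ∀ j, DiffsMem G j m f

namespace DiffsMem

variable {G : ℕ → Subgroup H} {j m : ℕ} {f : ℕ → H}

theorem mem (hf : DiffsMem G j m f) (n : ℕ) : f n ∈ G m := by
  cases j with
  | zero => exact hf n
  | succ j => exact hf.1 n

theorem of_succ (hf : DiffsMem G (j + 1) m f) : DiffsMem G j m f := by
  induction j generalizing m f with
  | zero => exact hf.1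
  | succ j ih => exact ⟨hf.1, ih hf.2⟩

theorem comp_succ (hf : DiffsMem G j m f) : DiffsMem G j m (fun n => f (n + 1)) := by
  induction j generalizing m f with
  | zero => exact fun n => hf (n + 1)
  | succ j ih => exact ⟨fun n => hf.1 (n + 1), ih hf.2⟩

theorem mono (hG : Antitone G) {m' : ℕ} (hf : DiffsMem G j m f) (h : m' ≤ m) :
    DiffsMem G j m' f := by
  induction j generalizing m m' f with
  | zero => exact fun n => hG h (hf n)
  | succ j ih => exact ⟨fun n => hG h (hf.1 n), ih hf.2 (by omega)⟩

theorem one : DiffsMem G j m (1 : ℕ → H) := by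
  induction j generalizing m with
  | zero => exact fun _ => one_mem _
  | succ j ih =>
    have h1 : mulFwdDiff (1 : ℕ → H) = 1 := mulFwdDiff_const 1
    exact ⟨fun _ => one_mem _, by rw [h1]; exact ih⟩

theorem pow_choose (hG : Antitone G) {a : H} {k : ℕ} (ha : a ∈ G (m + k)) :
    DiffsMem G j m (fun n => a ^ n.choose k) := by
  induction j generalizing m k with
  | zero => exact fun n => hG (Nat.le_add_right m k) (pow_mem ha _)
  | succ j ih =>
    refine ⟨fun n => hG (Nat.le_add_right m k) (pow_mem ha _), ?_⟩
    cases k with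
    | zero => simp only [Nat.choose_zero_right, pow_one, mulFwdDiff_const]; exact one
    | succ k => rw [mulFwdDiff_pow_choose_succ]; exact ih (by rwa [Nat.add_right_comm])

theorem mem_of_eq_one (hf : DiffsMem G j m f) (h : ∀ i < j, f i = 1) : f j ∈ G (m + j) := by
  induction j generalizing m f with
  | zero => exact hf 0
  | succ j ih =>
    have := ih hf.2 fun i hi => by simp [mulFwdDiff, h i (by omega), h (i + 1) (by omega)]
    simpa [mulFwdDiff, h j (by omega), ← add_assoc, Nat.add_right_comm] using this

end DiffsMem

structure DiffsMemClosed (G : ℕ → Subgroup H) (j : ℕ) : Prop where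
  mul {m : ℕ} {f g : ℕ → H} : DiffsMem G j m f → DiffsMem G j m g → DiffsMem G j m (f * g)
  inv {m : ℕ} {f : ℕ → H} : DiffsMem G j m f → DiffsMem G j m f⁻¹
  commutator {a b : ℕ} {u v : ℕ → H} :
    DiffsMem G j a u → DiffsMem G j b v → DiffsMem G j (a + b) ⁅u, v⁆

theorem DiffsMemClosed.conj {G : ℕ → Subgroup H} (hG : Antitone G) {j m k : ℕ}
    (h : DiffsMemClosed G j) {z g : ℕ → H} (hz : DiffsMem G j m z) (hg : DiffsMem G j k g) :
    DiffsMem G j m (g * z * g⁻¹) := by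
  have hc : DiffsMem G j m ⁅g, z⁆ := by
    simpa using h.commutator (hg.mono hG (Nat.zero_le k)) hz
  simpa [commutatorElement_def] using h.mul hc hz

namespace IsNSeries

variable {G : ℕ → Subgroup H} (hG : IsNSeries G)
include hG

theorem diffsMemClosed_zero : DiffsMemClosed G 0 where
  mul hf hg n := mul_mem (hf n) (hg n)
  inv hf n := inv_mem (hf n)
  commutator hu hv n := hG.commutator_mem (hu n) (hv n)

theorem diffsMemClosed_succ {j : ℕ} (h : DiffsMemClosed G j) : DiffsMemClosed G (j + 1) where
  mul {m f g} hf hg := by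
    refine ⟨fun n => mul_mem (hf.mem n) (hg.mem n), ?_⟩
    rw [mulFwdDiff_mul]
    have hc : DiffsMem G j (m + 1) ⁅g⁻¹, mulFwdDiff f⁆ :=
      (h.commutator (h.inv hg.of_succ) hf.2).mono hG.antitone (Nat.le_add_left _ _)
    exact h.mul (h.mul hc hf.2) hg.2
  inv {m f} hf := by
    refine ⟨fun n => inv_mem (hf.mem n), ?_⟩
    rw [mulFwdDiff_inv]
    have hc : DiffsMem G j (m + 1) ⁅f, (mulFwdDiff f)⁻¹⁆ :=
      (h.commutator hf.of_succ (h.inv hf.2)).mono hG.antitone (Nat.le_add_left _ _)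
    exact h.mul hc (h.inv hf.2)
  commutator {a b u v} hu hv := by
    refine ⟨fun n => hG.commutator_mem (hu.mem n) (hv.mem n), ?_⟩
    rw [mulFwdDiff_commutator]
    have hW : DiffsMem G j (a + b + 1) (u * ⁅mulFwdDiff u, v⁆ * u⁻¹) :=
      h.conj hG.antitone (by simpa [Nat.add_right_comm] using h.commutator hu.2 hv.of_succ)
        hu.of_succ
    have hV : DiffsMem G j (a + b + 1) (v * ⁅fun n => u (n + 1), mulFwdDiff v⁆ * v⁻¹) :=
      h.conj hG.antitone (by simpa [add_assoc] using h.commutator hu.of_succ.comp_succ hv.2)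
        hv.of_succ
    exact h.mul (h.conj hG.antitone hW (h.commutator hv.of_succ hu.of_succ)) hV

theorem diffsMemClosed (j : ℕ) : DiffsMemClosed G j := by
  induction j with
  | zero => exact hG.diffsMemClosed_zero
  | succ j ih => exact hG.diffsMemClosed_succ ih

theorem isPolySeq_mul {m : ℕ} {f g : ℕ → H} (hf : IsPolySeq G m f) (hg : IsPolySeq G m g) :
    IsPolySeq G m (f * g) :=
  fun j => (hG.diffsMemClosed j).mul (hf j) (hg j)

theorem isPolySeq_inv {m : ℕ} {f : ℕ → H} (hf : IsPolySeq G m f) : IsPolySeq G m f⁻¹ :=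
  fun j => (hG.diffsMemClosed j).inv (hf j)

end IsNSeries

namespace IsPolySeq

variable {G : ℕ → Subgroup H} {m : ℕ} {f : ℕ → H}

theorem pow_choose (hG : Antitone G) {a : H} {k : ℕ} (ha : a ∈ G k) :
    IsPolySeq G 0 (fun n => a ^ n.choose k) :=
  fun _ => DiffsMem.pow_choose hG (by rwa [zero_add])

theorem mem_of_eq_one {k : ℕ} (hf : IsPolySeq G m f) (h : ∀ i < k, f i = 1) :
    f k ∈ G (m + k) :=
  (hf k).mem_of_eq_one h

theorem eq_one_of_eq_one_of_lt (hG : Antitone G) {c : ℕ} (hbot : G c = ⊥)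
    (hf : IsPolySeq G 0 f) (h : ∀ i < c, f i = 1) (n : ℕ) : f n = 1 := by
  induction n using Nat.strong_induction_on with
  | _ n ih =>
    rcases lt_or_ge n c with hn | hn
    · exact h n hn
    · have := hG hn (by simpa using hf.mem_of_eq_one ih)
      rwa [hbot, Subgroup.mem_bot] at this

end IsPolySeq

namespace IsNSeries

variable {G : ℕ → Subgroup H} (hG : IsNSeries G)
include hG

theorem apply_eq_one_of_pow_choose_eq_one {c N k : ℕ} (hbot : G c = ⊥) {f : ℕ → H}
    (hf : IsPolySeq G 0 f) (hk : ∀ i < k, f i = 1)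
    (hN : ∀ j, k ≤ j → j < c → ∀ g ∈ G j, g ^ N.choose j = 1) : f N = 1 := by
  -- Peel off `f k ^ n.choose k`; the rest vanishes below `k + 1`.
  induction h : c - k generalizing k f with
  | zero => exact hf.eq_one_of_eq_one_of_lt hG.antitone hbot (fun i hi => hk i (by omega)) N
  | succ d ih =>
    have ha : f k ∈ G k := by simpa using hf.mem_of_eq_one hk
    set f' := (fun n => f k ^ n.choose k)⁻¹ * f
    have hf' : IsPolySeq G 0 f' :=
      hG.isPolySeq_mul (hG.isPolySeq_inv (.pow_choose hG.antitone ha)) hf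
    have hk' : ∀ i < k + 1, f' i = 1 := by
      intro i hi
      rcases Nat.lt_succ_iff_lt_or_eq.mp hi with hi | rfl
      · simp [f', Nat.choose_eq_zero_of_lt hi, hk i hi]
      · simp [f']
    have := ih hf' hk' (fun j hj hjc => hN j (by omega) hjc) (by omega)
    calc f N = f k ^ N.choose k * f' N := by simp [f']
      _ = 1 := by rw [this, hN k le_rfl (by omega) _ ha, one_mul]

theorem mul_pow_eq {c N : ℕ} (hbot : G c = ⊥) {x y : H} (hx : x ∈ G 1) (hy : y ∈ G 1)
    (hN : ∀ j, 2 ≤ j → j < c → ∀ g ∈ G j, g ^ N.choose j = 1) :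
    (x * y) ^ N = x ^ N * y ^ N := by
  have hpow {g : H} (hg : g ∈ G 1) : IsPolySeq G 0 (fun n => g ^ n) := by
    simpa using IsPolySeq.pow_choose hG.antitone hg
  have hf : IsPolySeq G 0 ((fun n => x ^ n * y ^ n)⁻¹ * fun n => (x * y) ^ n) :=
    hG.isPolySeq_mul (hG.isPolySeq_inv (hG.isPolySeq_mul (hpow hx) (hpow hy)))
      (hpow (mul_mem hx hy))
  have := hG.apply_eq_one_of_pow_choose_eq_one hbot hf (k := 2)
    (fun i hi => by interval_cases i <;> simp) hN
  rwa [Pi.mul_apply, Pi.inv_apply, inv_mul_eq_one, eq_comm] at this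

end IsNSeries

namespace Subgroup

variable {N : Subgroup H}

theorem commutator_commutator_le_of_rotate_s10 [N.Normal] {H₁ H₂ H₃ : Subgroup H}
    (h₁ : ⁅⁅H₂, H₃⁆, H₁⁆ ≤ N) (h₂ : ⁅⁅H₃, H₁⁆, H₂⁆ ≤ N) : ⁅⁅H₁, H₂⁆, H₃⁆ ≤ N := by
  rw [← QuotientGroup.ker_mk' N, ← map_eq_bot_iff] at h₁ h₂ ⊢
  simp only [map_commutator] at h₁ h₂ ⊢
  exact commutator_commutator_eq_bot_of_rotate h₁ h₂

theorem commutator_closure_le [N.Normal] {s : Set H} (h : ∀ x ∈ s, ∀ y ∈ s, ⁅x, y⁆ ∈ N) :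
    ⁅closure s, closure s⁆ ≤ N := by
  rw [← QuotientGroup.ker_mk' N, ← map_eq_bot_iff, map_commutator, MonoidHom.map_closure,
    commutator_eq_bot_iff_le_centralizer, centralizer_closure, closure_le]
  rintro _ ⟨x, hx, rfl⟩ _ ⟨y, hy, rfl⟩
  rw [eq_comm, ← commutatorElement_eq_one_iff_mul_comm, ← map_commutatorElement]
  exact (QuotientGroup.eq_one_iff _).mpr (h x hx y hy)

theorem commutator_top_lowerCentralSeries_le (a b : ℕ) :
    ⁅(⊤ : Subgroup H).lowerCentralSeries a, (⊤ : Subgroup H).lowerCentralSeries b⁆ ≤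
      (⊤ : Subgroup H).lowerCentralSeries (a + b + 1) := by
  induction b generalizing a with
  | zero => rfl
  | succ b ih =>
    rw [lowerCentralSeries_succ, commutator_comm]
    refine commutator_commutator_le_of_rotate_s10 ?_ ?_
    · rw [commutator_comm ⊤, ← lowerCentralSeries_succ]
      convert ih (a + 1) using 2
      omega
    · exact commutator_mono (ih a) le_top

theorem commutator_lowerCentralSeries_le_s10 (S : Subgroup H) (a b : ℕ) :
    ⁅S.lowerCentralSeries a, S.lowerCentralSeries b⁆ ≤ S.lowerCentralSeries (a + b + 1) := by
  rw [← top_subtype_lowerCentralSeries S a, ← top_subtype_lowerCentralSeries S b,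
    ← top_subtype_lowerCentralSeries S, ← map_commutator]
  exact map_mono (commutator_top_lowerCentralSeries_le a b)

/-- `S.lowerCentralSeries (j - 1)` is `γ_j(S)`; truncated subtraction makes the terms of weight `0`
and `1` both equal to `S`. -/
theorem isNSeries_lowerCentralSeries_pred (S : Subgroup H) :
    IsNSeries fun j => S.lowerCentralSeries (j - 1) where
  antitone _ _ h := S.lowerCentralSeries_antitone (Nat.sub_le_sub_right h 1)
  commutator_le a b := (S.commutator_lowerCentralSeries_le_s10 _ _).trans
    (S.lowerCentralSeries_antitone (by omega))

theorem lowerCentralSeries_succ_le_of_commutator_le {S : Subgroup H} {b : ℕ}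
    (h : ⁅S, S⁆ ≤ (⊤ : Subgroup H).lowerCentralSeries b) (k : ℕ) :
    S.lowerCentralSeries (k + 1) ≤ (⊤ : Subgroup H).lowerCentralSeries (b + k) := by
  induction k with
  | zero => exact h
  | succ k ih => exact commutator_mono ih le_top

theorem map_top_lowerCentralSeries_of_surjective {K : Type*} [Group K] {f : H →* K}
    (hf : Function.Surjective f) (n : ℕ) :
    ((⊤ : Subgroup H).lowerCentralSeries n).map f = (⊤ : Subgroup K).lowerCentralSeries n := by
  rw [map_lowerCentralSeries, map_top_of_surjective f hf]

end Subgroup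

end NSeries

theorem Nat.Prime.pow_dvd_choose_pow {p e k : ℕ} (hp : p.Prime) (hk : 0 < k) (hkp : k < p) :
    p ^ e ∣ (p ^ e).choose k := by
  obtain ⟨n, hn⟩ := Nat.exists_eq_add_one.mpr (pow_pos hp.pos e)
  obtain ⟨k, rfl⟩ := Nat.exists_eq_add_one.mpr hk
  have hcop : Nat.Coprime (p ^ e) (k + 1) :=
    ((hp.coprime_iff_not_dvd).mpr (Nat.not_dvd_of_pos_of_lt hk hkp)).pow_left e
  refine hcop.dvd_of_dvd_mul_right ⟨n.choose k, ?_⟩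
  rw [hn, Nat.add_one_mul_choose_eq]

section Torsion

open Subgroup

variable {Q : Type*} [Group Q] {p e : ℕ}

theorem mul_pow_prime_pow_eq_of_commutator_le (hp : p.Prime)
    (hQ : (⊤ : Subgroup Q).lowerCentralSeries p = ⊥) {n : ℕ} (hn : 2 ≤ n)
    (htors : ∀ g ∈ (⊤ : Subgroup Q).lowerCentralSeries n, g ^ p ^ e = 1) {S : Subgroup Q}
    (hS : ⁅S, S⁆ ≤ (⊤ : Subgroup Q).lowerCentralSeries n) {x y : Q} (hx : x ∈ S) (hy : y ∈ S) :
    (x * y) ^ p ^ e = x ^ p ^ e * y ^ p ^ e := by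
  have hS_le (j : ℕ) (hj : 2 ≤ j) :
      S.lowerCentralSeries (j - 1) ≤ (⊤ : Subgroup Q).lowerCentralSeries (n + (j - 2)) := by
    obtain ⟨k, rfl⟩ : ∃ k, j = k + 2 := ⟨j - 2, by omega⟩
    exact lowerCentralSeries_succ_le_of_commutator_le hS k
  refine S.isNSeries_lowerCentralSeries_pred.mul_pow_eq (c := p) ?_ hx hy ?_
  · rw [eq_bot_iff, ← hQ]
    exact (hS_le p hp.two_le).trans ((⊤ : Subgroup Q).lowerCentralSeries_antitone (by omega))
  · intro j hj hjp g hg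
    obtain ⟨t, ht⟩ := hp.pow_dvd_choose_pow (e := e) (by omega) hjp
    rw [ht, pow_mul, htors g
      ((⊤ : Subgroup Q).lowerCentralSeries_antitone (Nat.le_add_right _ _) (hS_le j hj hg)),
      one_pow]

theorem pow_prime_pow_eq_one_of_mem_lowerCentralSeries_of_succ (hp : p.Prime)
    (hQ : (⊤ : Subgroup Q).lowerCentralSeries p = ⊥) (hcent : ∀ x y : Q, Commute (x ^ p ^ e) y)
    {m : ℕ} (hm : 1 ≤ m) (htors : ∀ g ∈ (⊤ : Subgroup Q).lowerCentralSeries (m + 1), g ^ p ^ e = 1)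
    {x : Q} (hx : x ∈ (⊤ : Subgroup Q).lowerCentralSeries m) : x ^ p ^ e = 1 := by
  obtain ⟨k, rfl⟩ : ∃ k, m = k + 1 := ⟨m - 1, by omega⟩
  have hmul {S : Subgroup Q} (hS : ⁅S, S⁆ ≤ (⊤ : Subgroup Q).lowerCentralSeries (k + 1 + 1))
      {x y : Q} (hx : x ∈ S) (hy : y ∈ S) : (x * y) ^ p ^ e = x ^ p ^ e * y ^ p ^ e :=
    mul_pow_prime_pow_eq_of_commutator_le hp hQ (by omega) htors hS hx hy
  rw [Subgroup.lowerCentralSeries_succ, Subgroup.commutator_def] at hx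
  induction hx using closure_induction with
  | mem _ hw =>
    obtain ⟨z, hz, q, -, rfl⟩ := hw
    have hw : ⁅z, q⁆ ∈ (⊤ : Subgroup Q).lowerCentralSeries (k + 1) :=
      commutator_mem_commutator hz (mem_top q)
    have hS : ⁅closure {z⁻¹, ⁅z, q⁆}, closure {z⁻¹, ⁅z, q⁆}⁆ ≤
        (⊤ : Subgroup Q).lowerCentralSeries (k + 1 + 1) := by
      refine commutator_closure_le ?_
      rintro x (rfl | rfl) y (rfl | rfl)
      · rw [commutatorElement_self]; exact one_mem _
      · rw [← commutatorElement_inv]; exact inv_mem (commutator_mem_commutator hw (mem_top _))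
      all_goals exact commutator_mem_commutator hw (mem_top _)
    have hconj : z⁻¹ * ⁅z, q⁆ = q * z⁻¹ * q⁻¹ := by rw [commutatorElement_def]; group
    have := hmul hS (Subgroup.subset_closure (Set.mem_insert _ _))
      (Subgroup.subset_closure (Set.mem_insert_of_mem _ rfl))
    rwa [hconj, conj_pow, ← (hcent _ _).eq, mul_inv_cancel_right, eq_comm, mul_eq_left] at this
  | one => exact one_pow _
  | mul x y hx hy ihx ihy =>
    rw [hmul (commutator_mono le_rfl le_top) hx hy, ihx, ihy, one_mul]
  | inv x _ ih => rw [inv_pow, ih, inv_one]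

theorem pow_prime_pow_eq_one_of_mem_lowerCentralSeries (hp : p.Prime)
    (hQ : (⊤ : Subgroup Q).lowerCentralSeries p = ⊥) (hcent : ∀ x y : Q, Commute (x ^ p ^ e) y)
    {m : ℕ} (hm : 1 ≤ m) {x : Q} (hx : x ∈ (⊤ : Subgroup Q).lowerCentralSeries m) :
    x ^ p ^ e = 1 := by
  refine Nat.decreasingInduction' (P := fun k => ∀ x ∈ (⊤ : Subgroup Q).lowerCentralSeries k,
      x ^ p ^ e = 1) (n := p + m) (fun k _ hmk ih _ =>
    pow_prime_pow_eq_one_of_mem_lowerCentralSeries_of_succ hp hQ hcent (hm.trans hmk) ih)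
    (Nat.le_add_left m p) (fun x hx => ?_) x hx
  replace hx := (⊤ : Subgroup Q).lowerCentralSeries_antitone (Nat.le_add_right p m) hx
  rw [hQ, mem_bot] at hx
  rw [hx, one_pow]

end Torsion

theorem QuotientGroup.commute_mk_of_mem {F : Type*} [Group F] {R : Subgroup F} [R.Normal]
    {r : F} (hr : r ∈ R) (y : F ⧸ ⁅R, (⊤ : Subgroup F)⁆) : Commute (r : F ⧸ ⁅R, ⊤⁆) y := by
  induction y using QuotientGroup.induction_on with
  | H y =>
    rw [← commutatorElement_eq_one_iff_commute]
    exact (QuotientGroup.eq_one_iff ⁅r, y⁆).mpr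
      (Subgroup.commutator_mem_commutator hr (Subgroup.mem_top y))

theorem QuotientGroup.lowerCentralSeries_succ_eq_bot_of_le {F : Type*} [Group F] {R : Subgroup F}
    [R.Normal] {n : ℕ} (h : (⊤ : Subgroup F).lowerCentralSeries n ≤ R) :
    (⊤ : Subgroup (F ⧸ ⁅R, (⊤ : Subgroup F)⁆)).lowerCentralSeries (n + 1) = ⊥ := by
  rw [← Subgroup.map_top_lowerCentralSeries_of_surjective (QuotientGroup.mk'_surjective _),
    Subgroup.map_eq_bot_iff, QuotientGroup.ker_mk']
  exact Subgroup.commutator_mono h le_top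

theorem schurMultiplier_exponent_dvd_of_class_lt_p_general {F : Type*} [Group F]
    (R : Subgroup F) [R.Normal] (p e : ℕ) (hp : p.Prime)
    (hnil : (⊤ : Subgroup F).lowerCentralSeries (p - 1) ≤ R)
    (hexp : ∀ x : F, x ^ (p ^ e) ∈ R)
    (g : F) (hg : g ∈ R ⊓ commutator F) :
    g ^ (p ^ e) ∈ ⁅R, (⊤ : Subgroup F)⁆ := by
  have hQ := QuotientGroup.lowerCentralSeries_succ_eq_bot_of_le hnil
  rw [Nat.sub_add_cancel hp.one_le] at hQ
  have hcent (x y : F ⧸ ⁅R, (⊤ : Subgroup F)⁆) : Commute (x ^ p ^ e) y := by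
    induction x using QuotientGroup.induction_on with
    | H x => exact QuotientGroup.commute_mk_of_mem (hexp x) y
  have hg' : (g : F ⧸ ⁅R, (⊤ : Subgroup F)⁆) ∈ (⊤ : Subgroup _).lowerCentralSeries 1 := by
    rw [← Subgroup.map_top_lowerCentralSeries_of_surjective (QuotientGroup.mk'_surjective _)]
    exact Subgroup.mem_map_of_mem _ hg.2
  have := pow_prime_pow_eq_one_of_mem_lowerCentralSeries hp hQ hcent le_rfl hg'
  rwa [← QuotientGroup.mk_pow, QuotientGroup.eq_one_iff] at this

/-- The Schur multiplier case of Corollary 3.4: if `G = F/R` is a `p`-group of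
class at most `p - 1` and exponent dividing `p^e` (i.e. `γ_p(F) ≤ R` and
`x^(p^e) ∈ R` for all `x ∈ F`), then every `g ∈ R ∩ ⁅F, F⁆` satisfies
`g^(p^e) ∈ ⁅R, F⁆`; that is, the exponent of the Schur multiplier
`M(G) = (R ∩ ⁅F, F⁆)/⁅R, F⁆` divides `exp(G)`.
(Here `γ_p(F) = lowerCentralSeries F (p - 1)`.) -/
theorem schurMultiplier_exponent_dvd_of_class_lt_p {F : Type*} [Group F]
    [IsFreeGroup F] (R : Subgroup F) [R.Normal] (p e : ℕ) (hp : p.Prime)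
    (he : 1 ≤ e)
    (hnil : (⊤ : Subgroup F).lowerCentralSeries (p - 1) ≤ R)
    (hexp : ∀ x : F, x ^ (p ^ e) ∈ R)
    (g : F) (hg : g ∈ R ⊓ commutator F) :
    g ^ (p ^ e) ∈ ⁅R, (⊤ : Subgroup F)⁆ :=
  schurMultiplier_exponent_dvd_of_class_lt_p_general R p e hp hnil hexp g hg
end
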